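/- Let f ∈ 𝒫₀ be non-constant with f(0) ∈ ℝ and f′(0) > 0, let g be the reduction of f at 0, and write f(z) = Σⱼ aⱼ zʲ and g(z) = Σⱼ bⱼ zʲ for the Taylor series at 0. Then for every integer k ≥ 2: (a₀, …, a_{k−1} are all real and aₖ is not real) if and only if (b₀, …, b_{k−3} are all real and b_{k−2} is not real); that is, reduction reduces the index of the first non-real Taylor coefficient by exactly 2. -/

import Mathlib

open Complex Filter Set Topology Asymptotics Metric Polynomial

noncomputable section

/-- The open upper half-plane, as a subset of `ℂ`. -/
def UHP : Set ℂ := {z : ℂ | 0 < z.im}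

/-- `f` has order of contact `c` with `ℝ` at `0` (half-plane version). -/
def HalfPlaneContact (f : ℂ → ℂ) (c : ℝ) : Prop :=
  (f 0).im = 0 ∧
  ∃ m M δ : ℝ, 0 < m ∧ m ≤ M ∧ 0 < δ ∧
    ∀ x : ℝ, 0 < |x| → |x| < δ →
      m ≤ (f (x : ℂ)).im / ‖f 0 - f (x : ℂ)‖ ^ c ∧
      (f (x : ℂ)).im / ‖f 0 - f (x : ℂ)‖ ^ c ≤ M

/-- `φ` has order of contact `c` with `∂𝔻` at `ζ` (disk version). -/
def DiskContact (φ : ℂ → ℂ) (ζ : ℂ) (c : ℝ) : Prop :=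
  ‖φ ζ‖ = 1 ∧
  ∃ m M δ : ℝ, 0 < m ∧ m ≤ M ∧ 0 < δ ∧
    ∀ η : ℂ, ‖η‖ = 1 → η ≠ ζ → ‖η - ζ‖ < δ →
      m ≤ (1 - ‖φ η‖ ^ 2) / ‖φ ζ - φ η‖ ^ c ∧
      (1 - ‖φ η‖ ^ 2) / ‖φ ζ - φ η‖ ^ c ≤ M

/-- The Pick class `𝒫`: analytic on `ℍ` with nonnegative imaginary part there. -/
def InPick (f : ℂ → ℂ) : Prop :=
  DifferentiableOn ℂ f UHP ∧ ∀ z ∈ UHP, 0 ≤ (f z).im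

/-- The class `𝒫₀`: members of `𝒫` that extend analytically to a neighborhood of `0`. -/
def InPick0 (f : ℂ → ℂ) : Prop := InPick f ∧ AnalyticAt ℂ f 0

/-- The `k`-th Taylor coefficient of `f` at `0`. -/
def taylorCoeff (f : ℂ → ℂ) (k : ℕ) : ℂ := iteratedDeriv k f 0 / (Nat.factorial k : ℂ)

/-- The Hankel matrix `H_m(a₁, …, a_{2m−1})` with `(i,j)` entry `a_{i+j+1}` (0-based). -/
def hankel (a : ℕ → ℂ) (m : ℕ) : Matrix (Fin m) (Fin m) ℂ :=
  Matrix.of fun i j => a (i.1 + j.1 + 1)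

/-- The linear fractional transformation associated with a 2×2 matrix. -/
def lftApply (M : Matrix (Fin 2) (Fin 2) ℂ) (h : ℂ) : ℂ :=
  (M 0 0 * h + M 0 1) / (M 1 0 * h + M 1 1)

/-- The augmentation matrix `A(a₀, a₁)(z)`. -/
def augMatrix (a₀ a₁ : ℝ) (z : ℂ) : Matrix (Fin 2) (Fin 2) ℂ :=
  !![(a₀ : ℂ) * (a₁ : ℂ) * z, -(a₀ : ℂ) - (a₁ : ℂ) * z; (a₁ : ℂ) * z, -1]

/-- The product `A(s₀,t₀)(z) A(s₁,t₁)(z) ⋯ A(s_{m−1},t_{m−1})(z)`. -/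
def augProdN (m : ℕ) (s t : ℕ → ℝ) (z : ℂ) : Matrix (Fin 2) (Fin 2) ℂ :=
  (List.ofFn fun i : Fin m => augMatrix (s i.1) (t i.1) z).prod

/-- The conformal map `τ_α : 𝔻 → ℍ`, `τ_α(z) = i(α − z)/(α + z)`. -/
def cayley (α z : ℂ) : ℂ := Complex.I * (α - z) / (α + z)

/-- The inverse `τ_α⁻¹ : ℍ → 𝔻`, `τ_α⁻¹(w) = α(i − w)/(i + w)`. -/
def cayleyInv (α w : ℂ) : ℂ := α * (Complex.I - w) / (Complex.I + w)

/-- The exterior map `φ_e = ρ ∘ φ ∘ ρ`, where `ρ(z) = 1/conj(z)`. -/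
def extMap (φ : ℂ → ℂ) (z : ℂ) : ℂ :=
  ((starRingEnd ℂ) (φ (((starRingEnd ℂ) z)⁻¹)))⁻¹


/-! A function `F` analytic at `0` has its first non-real Taylor coefficient at index `k` exactly
when `F - F*`, with `F* = conj ∘ F ∘ conj`, vanishes to order `k` at `0`. Clearing denominators,
the reduction says `g · (f - f 0) · f'(0) z = f - f 0 - f'(0) z` on `ℍ`, hence near `0` by the
identity theorem; since `f 0` and `f'(0)` are real, the same holds for `g*` and `f*`. Combining
the two identities gives `f - f* = (f - f 0) (f* - f 0) (g - g*)`, and both `f - f 0` and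
`f* - f 0` have a simple zero at `0`. -/

open ComplexConjugate

theorem iteratedDeriv_conj_conj {𝕜 : Type*} [NontriviallyNormedField 𝕜] [StarRing 𝕜]
    [NormedStarGroup 𝕜] (F : 𝕜 → 𝕜) (n : ℕ) :
    iteratedDeriv n (conj ∘ F ∘ conj) = conj ∘ iteratedDeriv n F ∘ conj := by
  induction n with
  | zero => simp
  | succ n ih => rw [iteratedDeriv_succ, ih, deriv_conj_conj, iteratedDeriv_succ]

theorem AnalyticAt.conj_conj {F : ℂ → ℂ} {x : ℂ} (hF : AnalyticAt ℂ F x) :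
    AnalyticAt ℂ (conj ∘ F ∘ conj) (conj x) := by
  rw [Complex.analyticAt_iff_eventually_differentiableAt] at hF ⊢
  have hconj : Tendsto conj (𝓝 (conj x)) (𝓝 x) := by
    simpa using Complex.continuous_conj.tendsto (conj x)
  filter_upwards [hconj.eventually hF] with z hz
  exact differentiableAt_conj_conj_iff.mpr hz

theorem AnalyticAt.conj_conj_zero {F : ℂ → ℂ} (hF : AnalyticAt ℂ F 0) :
    AnalyticAt ℂ (conj ∘ F ∘ conj) 0 := by
  simpa using hF.conj_conj

theorem iteratedDeriv_sub_conj_conj_eq_zero_iff {F : ℂ → ℂ} (hF : AnalyticAt ℂ F 0) (n : ℕ) :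
    iteratedDeriv n (F - conj ∘ F ∘ conj) 0 = 0 ↔ (taylorCoeff F n).im = 0 := by
  rw [iteratedDeriv_sub hF.contDiffAt hF.conj_conj_zero.contDiffAt, iteratedDeriv_conj_conj]
  simp [taylorCoeff, Complex.sub_conj, Nat.factorial_ne_zero]

theorem analyticOrderAt_sub_conj_conj_eq_iff {F : ℂ → ℂ} (hF : AnalyticAt ℂ F 0) (k : ℕ) :
    analyticOrderAt (F - conj ∘ F ∘ conj) 0 = k ↔
      (∀ j < k, (taylorCoeff F j).im = 0) ∧ (taylorCoeff F k).im ≠ 0 := by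
  simp only [analyticOrderAt_eq_nat_iff_iteratedDeriv_eq_zero (hF.sub hF.conj_conj_zero), ne_eq,
    iteratedDeriv_sub_conj_conj_eq_zero_iff hF]

theorem frequently_mem_UHP : ∃ᶠ z in 𝓝[≠] (0 : ℂ), z ∈ UHP := by
  have h0 : (0 : ℂ) ∈ closure UHP := by simp [UHP, closure_setOfPred_lt_im]
  rw [frequently_nhdsWithin_iff]
  refine (mem_closure_iff_frequently.mp h0).mono fun z hz => ⟨hz, ?_⟩
  rintro rfl
  simp [UHP] at hz

section Reduction

variable {f g : ℂ → ℂ}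

theorem eventually_mul_reduction_eq (hf : AnalyticAt ℂ f 0) (hg : AnalyticAt ℂ g 0)
    (ha : deriv f 0 ≠ 0) (hgred : ∀ z ∈ UHP, g z = -(f z - f 0)⁻¹ + (deriv f 0 * z)⁻¹) :
    ∀ᶠ z in 𝓝 0, g z * ((f z - f 0) * (deriv f 0 * z)) = f z - f 0 - deriv f 0 * z := by
  have hne : ∀ᶠ z in 𝓝[≠] 0, f z ≠ f 0 := hf.differentiableAt.hasDerivAt.eventually_ne ha
  refine (AnalyticAt.frequently_eq_iff_eventually_eq (by fun_prop) (by fun_prop)).mp ?_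
  refine (frequently_mem_UHP.and_eventually (hne.and self_mem_nhdsWithin)).mono ?_
  rintro z ⟨hz, hfz, hz0 : z ≠ 0⟩
  rw [hgred z hz]
  field_simp [sub_ne_zero.mpr hfz]
  ring

theorem eventually_mul_reduction_conj_conj_eq (hf : AnalyticAt ℂ f 0) (hg : AnalyticAt ℂ g 0)
    (hre : (f 0).im = 0) (hdim : (deriv f 0).im = 0) (ha : deriv f 0 ≠ 0)
    (hgred : ∀ z ∈ UHP, g z = -(f z - f 0)⁻¹ + (deriv f 0 * z)⁻¹) :
    ∀ᶠ z in 𝓝 0, (conj ∘ g ∘ conj) z * (((conj ∘ f ∘ conj) z - f 0) * (deriv f 0 * z)) =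
      (conj ∘ f ∘ conj) z - f 0 - deriv f 0 * z := by
  have hconj : Tendsto conj (𝓝 (0 : ℂ)) (𝓝 0) := by
    simpa using Complex.continuous_conj.tendsto 0
  filter_upwards [hconj.eventually (eventually_mul_reduction_eq hf hg ha hgred)] with z hz
  simpa [Complex.conj_eq_iff_im.mpr hre, Complex.conj_eq_iff_im.mpr hdim] using
    congrArg conj hz

theorem analyticOrderAt_sub_conj_conj_of_reduction (hf : AnalyticAt ℂ f 0)
    (hg : AnalyticAt ℂ g 0) (hre : (f 0).im = 0) (hdim : (deriv f 0).im = 0)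
    (ha : deriv f 0 ≠ 0) (hgred : ∀ z ∈ UHP, g z = -(f z - f 0)⁻¹ + (deriv f 0 * z)⁻¹) :
    analyticOrderAt (f - conj ∘ f ∘ conj) 0 = analyticOrderAt (g - conj ∘ g ∘ conj) 0 + 2 := by
  have hred := eventually_mul_reduction_eq hf hg ha hgred
  have hred' := eventually_mul_reduction_conj_conj_eq hf hg hre hdim ha hgred
  set a := deriv f 0
  set fr := conj ∘ f ∘ conj
  set gr := conj ∘ g ∘ conj
  have hfr : AnalyticAt ℂ fr 0 := hf.conj_conj_zero
  have hgr : AnalyticAt ℂ gr 0 := hg.conj_conj_zero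
  have hw : analyticOrderAt (fun z => a * z) 0 = 1 :=
    AnalyticAt.analyticOrderAt_eq_one_of_zero_deriv_ne_zero (by fun_prop) (by simp) (by simpa)
  have hP : analyticOrderAt (fun z => f z - f 0) 0 = 1 :=
    hf.analyticOrderAt_sub_eq_one_of_deriv_ne_zero ha
  have hQ : analyticOrderAt (fun z => fr z - f 0) 0 = 1 := by
    have hfr0 : fr 0 = f 0 := by simpa [fr] using Complex.conj_eq_iff_im.mpr hre
    rw [← hfr0]
    refine hfr.analyticOrderAt_sub_eq_one_of_deriv_ne_zero ?_
    simpa [fr, deriv_conj_conj] using ha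
  have key : (fun z => a * z) * (f - fr) =ᶠ[𝓝 0]
      (fun z => a * z) * ((fun z => f z - f 0) * ((fun z => fr z - f 0) * (g - gr))) := by
    filter_upwards [hred, hred'] with z h h'
    simp only [Pi.mul_apply, Pi.sub_apply]
    linear_combination (f z - f 0) * h' - (fr z - f 0) * h
  have hord := analyticOrderAt_congr key
  repeat rw [analyticOrderAt_mul (by fun_prop) (by fun_prop)] at hord
  rw [hw, hP, hQ] at hord
  rw [ENat.add_right_injective_of_ne_top ENat.one_ne_top hord]
  ring

end Reduction

theorem reduction_first_nonreal_coeff_general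
    (f g : ℂ → ℂ) (hf : InPick0 f)
    (hre : (f 0).im = 0) (hdim : (deriv f 0).im = 0) (hdre : 0 < (deriv f 0).re)
    (hg : InPick0 g)
    (hgred : ∀ z ∈ UHP, g z = -(f z - f 0)⁻¹ + (deriv f 0 * z)⁻¹)
    (k : ℕ) (hk : 2 ≤ k) :
    ((∀ j < k, (taylorCoeff f j).im = 0) ∧ (taylorCoeff f k).im ≠ 0) ↔
    ((∀ j < k - 2, (taylorCoeff g j).im = 0) ∧ (taylorCoeff g (k - 2)).im ≠ 0) := by
  have ha : deriv f 0 ≠ 0 := fun h => by simp [h] at hdre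
  obtain ⟨m, rfl⟩ : ∃ m, k = m + 2 := ⟨k - 2, by omega⟩
  rw [← analyticOrderAt_sub_conj_conj_eq_iff hf.2, ← analyticOrderAt_sub_conj_conj_eq_iff hg.2,
    analyticOrderAt_sub_conj_conj_of_reduction hf.2 hg.2 hre hdim ha hgred, Nat.add_sub_cancel]
  push_cast
  exact (ENat.add_left_injective_of_ne_top (by simp)).eq_iff

/-- reduction lowers the index of the first non-real Taylor coefficient by
exactly `2`. -/
theorem reduction_first_nonreal_coeff
    (f g : ℂ → ℂ) (hf : InPick0 f)
    (hnc : ¬ ∀ z ∈ UHP, f z = f 0)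
    (hre : (f 0).im = 0) (hdim : (deriv f 0).im = 0) (hdre : 0 < (deriv f 0).re)
    (hg : InPick0 g)
    (hgred : ∀ z ∈ UHP, g z = -(f z - f 0)⁻¹ + (deriv f 0 * z)⁻¹)
    (k : ℕ) (hk : 2 ≤ k) :
    ((∀ j < k, (taylorCoeff f j).im = 0) ∧ (taylorCoeff f k).im ≠ 0) ↔
    ((∀ j < k - 2, (taylorCoeff g j).im = 0) ∧ (taylorCoeff g (k - 2)).im ≠ 0) :=
  reduction_first_nonreal_coeff_general f g hf hre hdim hdre hg hgred k hk
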